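/- arXiv:1509.04736 — 2 statements merged into one kernel-verified Lean document; each statement's English description precedes it below -/
import Mathlib

section
/- In the quantum spatial ageing algebra A, for every positive integer i, the identity Y·E^i = q^i·E^i·Y − (q(1−q^{2i})/(1−q^2))·X·E^{i−1} holds. -/
/-- Generators of the quantum spatial ageing algebra. -/
inductive QGen : Type
  | E | K | Kinv | X | Y

open FreeAlgebra in
/-- Defining relations of the quantum spatial ageing algebra
`EK = q⁻²KE`, `XK = q⁻¹KX`, `YK = qKY`, `EX = qXE`, `EY = X + q⁻¹YE`, `qYX = XY`,
together with `K K⁻¹ = K⁻¹ K = 1`. -/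
inductive QSARel (k : Type) [Field k] (q : k) :
    FreeAlgebra k QGen → FreeAlgebra k QGen → Prop
  | KKinv : QSARel k q (ι k QGen.K * ι k QGen.Kinv) 1
  | KinvK : QSARel k q (ι k QGen.Kinv * ι k QGen.K) 1
  | EK : QSARel k q (ι k QGen.E * ι k QGen.K) ((q ^ 2)⁻¹ • (ι k QGen.K * ι k QGen.E))
  | XK : QSARel k q (ι k QGen.X * ι k QGen.K) (q⁻¹ • (ι k QGen.K * ι k QGen.X))
  | YK : QSARel k q (ι k QGen.Y * ι k QGen.K) (q • (ι k QGen.K * ι k QGen.Y))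
  | EX : QSARel k q (ι k QGen.E * ι k QGen.X) (q • (ι k QGen.X * ι k QGen.E))
  | EY : QSARel k q (ι k QGen.E * ι k QGen.Y)
      (ι k QGen.X + q⁻¹ • (ι k QGen.Y * ι k QGen.E))
  | YX : QSARel k q (q • (ι k QGen.Y * ι k QGen.X)) (ι k QGen.X * ι k QGen.Y)

/-- The quantum spatial ageing algebra `𝒜 = 𝕂_q[X,Y] ⋊ U_q^{≥0}(sl₂)`. -/
noncomputable abbrev QSA (k : Type) [Field k] (q : k) : Type := RingQuot (QSARel k q)

noncomputable def Egen (k : Type) [Field k] (q : k) : QSA k q :=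
  RingQuot.mkAlgHom k (QSARel k q) (FreeAlgebra.ι k QGen.E)
noncomputable def Kgen (k : Type) [Field k] (q : k) : QSA k q :=
  RingQuot.mkAlgHom k (QSARel k q) (FreeAlgebra.ι k QGen.K)
noncomputable def Kinvgen (k : Type) [Field k] (q : k) : QSA k q :=
  RingQuot.mkAlgHom k (QSARel k q) (FreeAlgebra.ι k QGen.Kinv)
noncomputable def Xgen (k : Type) [Field k] (q : k) : QSA k q :=
  RingQuot.mkAlgHom k (QSARel k q) (FreeAlgebra.ι k QGen.X)
noncomputable def Ygen (k : Type) [Field k] (q : k) : QSA k q :=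
  RingQuot.mkAlgHom k (QSARel k q) (FreeAlgebra.ι k QGen.Y)

/-- The normal element `φ = EY - qYE`. -/
noncomputable def phi (k : Type) [Field k] (q : k) : QSA k q :=
  Egen k q * Ygen k q - q • (Ygen k q * Egen k q)

/-!
Moving `Y` past `E` gives `Y E = q E Y - q X`, and moving the resulting `X` to the left of a
power of `E` only rescales it (`Eⁿ X = qⁿ X Eⁿ`). Pushing `Y` through `Eⁱ` one factor at a time
thus produces a term `q^{2j+1} X E^{i-1}` at the `j`-th step, and
`∑_{j<i} q^{2j+1} = q(1 - q^{2i})/(1 - q²)`.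
-/

open Finset

section QCommutation

variable {R A : Type*} [CommRing R] [Ring A] [Algebra R A] {q : R} {e x y : A}

theorem pow_mul_eq_smul_mul_pow (hex : e * x = q • (x * e)) (n : ℕ) :
    e ^ n * x = q ^ n • (x * e ^ n) := by
  induction n with
  | zero => simp
  | succ n ih =>
    rw [pow_succ', mul_assoc, ih, mul_smul_comm, ← mul_assoc, hex, smul_mul_assoc, smul_smul,
      mul_assoc, ← pow_succ]

theorem mul_pow_succ_eq_of_mul_eq_sub (hex : e * x = q • (x * e))
    (hye : y * e = q • (e * y) - q • x) (n : ℕ) :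
    y * e ^ (n + 1) = q ^ (n + 1) • (e ^ (n + 1) * y) -
      (q * ∑ j ∈ range (n + 1), (q ^ 2) ^ j) • (x * e ^ n) := by
  induction n with
  | zero => simpa using hye
  | succ n ih =>
    have hpush : e ^ (n + 1) * (y * e) =
        q • (e ^ (n + 2) * y) - q ^ (n + 2) • (x * e ^ (n + 1)) := by
      rw [hye, mul_sub, mul_smul_comm, mul_smul_comm, ← mul_assoc, ← pow_succ,
        pow_mul_eq_smul_mul_pow hex, smul_smul, ← pow_succ']
    rw [pow_succ e (n + 1), ← mul_assoc, ih, sub_mul, smul_mul_assoc, smul_mul_assoc, mul_assoc,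
      hpush, mul_assoc, ← pow_succ, ← pow_succ e (n + 1), sum_range_succ _ (n + 1)]
    match_scalars <;> ring

end QCommutation

theorem Egen_mul_Xgen (k : Type) [Field k] (q : k) :
    Egen k q * Xgen k q = q • (Xgen k q * Egen k q) := by
  simpa only [Egen, Xgen, map_mul, map_smul] using
    RingQuot.mkAlgHom_rel k (QSARel.EX (k := k) (q := q))

theorem Egen_mul_Ygen (k : Type) [Field k] (q : k) :
    Egen k q * Ygen k q = Xgen k q + q⁻¹ • (Ygen k q * Egen k q) := by
  simpa only [Egen, Xgen, Ygen, map_mul, map_add, map_smul] using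
    RingQuot.mkAlgHom_rel k (QSARel.EY (k := k) (q := q))

theorem Ygen_mul_Egen (k : Type) [Field k] {q : k} (hq : q ≠ 0) :
    Ygen k q * Egen k q = q • (Egen k q * Ygen k q) - q • Xgen k q := by
  rw [Egen_mul_Ygen, smul_add, smul_smul, mul_inv_cancel₀ hq, one_smul, add_sub_cancel_left]

theorem div_one_sub_sq_eq_geom_sum {K : Type*} [Field K] {q : K} (hq2 : q ^ 2 ≠ 1) (n : ℕ) :
    q * (1 - q ^ (2 * n)) / (1 - q ^ 2) = q * ∑ j ∈ range n, (q ^ 2) ^ j := by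
  rw [div_eq_iff (sub_ne_zero.mpr hq2.symm), pow_mul, ← mul_neg_geom_sum]
  ring

theorem stmt1_general (k : Type) [Field k] (q : k) (hq : q ≠ 0)
    (hq' : ∀ n : ℕ, n ≠ 0 → q ^ n ≠ 1) (i : ℕ) :
    Ygen k q * Egen k q ^ i =
      q ^ i • (Egen k q ^ i * Ygen k q) -
        (q * (1 - q ^ (2 * i)) / (1 - q ^ 2)) • (Xgen k q * Egen k q ^ (i - 1)) := by
  rw [div_one_sub_sq_eq_geom_sum (hq' 2 two_ne_zero)]
  cases i with
  | zero => simp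
  | succ n =>
    exact mul_pow_succ_eq_of_mul_eq_sub (Egen_mul_Xgen k q) (Ygen_mul_Egen k hq) n

/-- `YEⁱ = qⁱ Eⁱ Y − (q(1−q^{2i})/(1−q²)) X E^{i−1}`. -/
theorem stmt1 (k : Type) [Field k] (q : k) (hq : q ≠ 0)
    (hq' : ∀ n : ℕ, n ≠ 0 → q ^ n ≠ 1) (i : ℕ) (hi : 1 ≤ i) :
    Ygen k q * Egen k q ^ i =
      q ^ i • (Egen k q ^ i * Ygen k q) -
        (q * (1 - q ^ (2 * i)) / (1 - q ^ 2)) • (Xgen k q * Egen k q ^ (i - 1)) :=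
  stmt1_general k q hq hq' i
end

section
/- In the quantum spatial ageing algebra A, the element X is a normal element: XA = AX. -/
/-! Each generator `g` satisfies `X g = c_g g X` for a nonzero scalar `c_g`, so `X a = σ(a) X`
for the algebra automorphism `σ` rescaling every generator `g` by `c_g`; as `σ` is onto,
`X𝒜 = σ(𝒜)X = 𝒜X`. -/

theorem range_mul_left_eq_range_mul_right {R : Type*} [Mul R] {x : R} {σ : R → R}
    (hσ : Function.Surjective σ) (h : ∀ a, x * a = σ a * x) :
    Set.range (fun a : R => x * a) = Set.range (fun a : R => a * x) := by
  rw [← hσ.range_comp (fun a => a * x)]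
  exact congrArg Set.range (funext h)

theorem RingQuot.mul_eq_map_mul_of_forall_ι {R ι : Type*} [CommSemiring R]
    {s : FreeAlgebra R ι → FreeAlgebra R ι → Prop} (x : RingQuot s)
    (σ : RingQuot s →ₐ[R] RingQuot s)
    (h : ∀ i, x * mkAlgHom R s (FreeAlgebra.ι R i) = σ (mkAlgHom R s (FreeAlgebra.ι R i)) * x)
    (a : RingQuot s) : x * a = σ a * x := by
  obtain ⟨a, rfl⟩ := mkAlgHom_surjective R s a
  induction a using FreeAlgebra.induction with
  | grade0 r => rw [AlgHom.commutes, AlgHom.commutes, Algebra.commutes]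
  | grade1 i => exact h i
  | mul a b ha hb => rw [map_mul, map_mul, ← mul_assoc, ha, mul_assoc, hb, ← mul_assoc]
  | add a b ha hb => rw [map_add, map_add, mul_add, ha, hb, add_mul]

namespace QSA

variable {k : Type} [Field k] {q : k}

variable (k q) in
noncomputable def gen (g : QGen) : QSA k q :=
  RingQuot.mkAlgHom k (QSARel k q) (FreeAlgebra.ι k g)

open QGen

theorem gen_K_mul_gen_Kinv : gen k q K * gen k q Kinv = 1 := by
  simpa [gen] using RingQuot.mkAlgHom_rel k (s := QSARel k q) .KKinv
theorem gen_Kinv_mul_gen_K : gen k q Kinv * gen k q K = 1 := by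
  simpa [gen] using RingQuot.mkAlgHom_rel k (s := QSARel k q) .KinvK
theorem gen_E_mul_gen_K :
    gen k q E * gen k q K = (q ^ 2)⁻¹ • (gen k q K * gen k q E) := by
  simpa [gen] using RingQuot.mkAlgHom_rel k (s := QSARel k q) .EK
theorem gen_X_mul_gen_K : gen k q X * gen k q K = q⁻¹ • (gen k q K * gen k q X) := by
  simpa [gen] using RingQuot.mkAlgHom_rel k (s := QSARel k q) .XK
theorem gen_Y_mul_gen_K : gen k q Y * gen k q K = q • (gen k q K * gen k q Y) := by
  simpa [gen] using RingQuot.mkAlgHom_rel k (s := QSARel k q) .YK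
theorem gen_E_mul_gen_X : gen k q E * gen k q X = q • (gen k q X * gen k q E) := by
  simpa [gen] using RingQuot.mkAlgHom_rel k (s := QSARel k q) .EX
theorem gen_E_mul_gen_Y :
    gen k q E * gen k q Y = gen k q X + q⁻¹ • (gen k q Y * gen k q E) := by
  simpa [gen] using RingQuot.mkAlgHom_rel k (s := QSARel k q) .EY
theorem gen_X_mul_gen_Y : gen k q X * gen k q Y = q • (gen k q Y * gen k q X) := by
  simpa [gen] using (RingQuot.mkAlgHom_rel k (s := QSARel k q) .YX).symm

/- Apart from `K K⁻¹ = K⁻¹ K = 1` and `EY = X + q⁻¹YE`, every relation equates two multiples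
of monomials in the same generators, so is preserved by any rescaling of the generators. -/
variable (q) in
noncomputable def rescale (c : QGen → k) (hK : c K * c Kinv = 1) (hX : c E * c Y = c X) :
    QSA k q →ₐ[k] QSA k q :=
  RingQuot.liftAlgHom k ⟨FreeAlgebra.lift k fun g => c g • gen k q g, by
    intro x y h
    cases h <;> simp only [map_mul, map_add, map_smul, map_one, FreeAlgebra.lift_ι_apply,
      smul_mul_smul_comm, gen_K_mul_gen_Kinv, gen_Kinv_mul_gen_K,
      gen_E_mul_gen_K, gen_X_mul_gen_K, gen_Y_mul_gen_K, gen_E_mul_gen_X, gen_E_mul_gen_Y,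
      gen_X_mul_gen_Y]
    all_goals first
      | module
      | (rw [← hX]; module)
      | simp [hK, mul_comm (c Kinv)]⟩

@[simp]
theorem rescale_gen (c : QGen → k) (hK : c K * c Kinv = 1) (hX : c E * c Y = c X) (g : QGen) :
    rescale q c hK hX (gen k q g) = c g • gen k q g := by
  simp [rescale, gen, RingQuot.liftAlgHom_mkAlgHom_apply]

theorem rescale_surjective (c : QGen → k) (hK : c K * c Kinv = 1) (hX : c E * c Y = c X)
    (hc : ∀ g, c g ≠ 0) : Function.Surjective (rescale q c hK hX) := by
  let cinv : QSA k q →ₐ[k] QSA k q :=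
    rescale q (fun g => (c g)⁻¹) (by rw [← mul_inv, hK, inv_one]) (by rw [← mul_inv, hX])
  have h : (rescale q c hK hX).comp cinv = AlgHom.id k (QSA k q) := by
    ext g
    change rescale q c hK hX (cinv (gen k q g)) = gen k q g
    simp [cinv, smul_smul, hc]
  exact fun a => ⟨cinv a, AlgHom.congr_fun h a⟩

variable (q) in
def twistX : QGen → k
  | E => q⁻¹
  | K => q⁻¹
  | Kinv => q
  | X => 1
  | Y => q

theorem twistX_K_mul_twistX_Kinv (hq : q ≠ 0) : twistX q K * twistX q Kinv = 1 :=
  inv_mul_cancel₀ hq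

theorem twistX_E_mul_twistX_Y (hq : q ≠ 0) : twistX q E * twistX q Y = twistX q X :=
  inv_mul_cancel₀ hq

theorem twistX_ne_zero (hq : q ≠ 0) (g : QGen) : twistX q g ≠ 0 := by
  cases g <;> simp [twistX, hq]

theorem gen_K_mul_gen_X (hq : q ≠ 0) : gen k q K * gen k q X = q • (gen k q X * gen k q K) := by
  rw [gen_X_mul_gen_K, smul_smul, mul_inv_cancel₀ hq, one_smul]

theorem gen_X_mul_gen (hq : q ≠ 0) (g : QGen) :
    gen k q X * gen k q g = twistX q g • (gen k q g * gen k q X) := by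
  cases g
  · change _ = q⁻¹ • _
    rw [gen_E_mul_gen_X, smul_smul, inv_mul_cancel₀ hq, one_smul]
  · exact gen_X_mul_gen_K
  · calc gen k q X * gen k q Kinv
        = gen k q Kinv * (gen k q K * gen k q X) * gen k q Kinv := by
          rw [← mul_assoc (gen k q Kinv), gen_Kinv_mul_gen_K, one_mul]
      _ = q • (gen k q Kinv * gen k q X) := by
          rw [gen_K_mul_gen_X hq, mul_smul_comm, smul_mul_assoc, mul_assoc, mul_assoc,
            gen_K_mul_gen_Kinv, mul_one]
  · rw [twistX, one_smul]
  · exact gen_X_mul_gen_Y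

theorem Xgen_mul_eq_rescale_mul (hq : q ≠ 0) (a : QSA k q) :
    Xgen k q * a =
      rescale q (twistX q) (twistX_K_mul_twistX_Kinv hq) (twistX_E_mul_twistX_Y hq) a * Xgen k q :=
  RingQuot.mul_eq_map_mul_of_forall_ι _ _ (fun g => by
    change gen k q X * gen k q g = rescale q _ _ _ (gen k q g) * gen k q X
    rw [rescale_gen, smul_mul_assoc]
    exact gen_X_mul_gen hq g) a

end QSA

theorem stmt5_general (k : Type) [Field k] (q : k) (hq : q ≠ 0) :
    Set.range (fun a : QSA k q => Xgen k q * a) =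
      Set.range (fun a : QSA k q => a * Xgen k q) :=
  range_mul_left_eq_range_mul_right
    (QSA.rescale_surjective _ _ _ (QSA.twistX_ne_zero hq)) (QSA.Xgen_mul_eq_rescale_mul hq)

/-- `X` is a normal element of `𝒜`: `X𝒜 = 𝒜X`. -/
theorem stmt5 (k : Type) [Field k] (q : k) (hq : q ≠ 0)
    (hq' : ∀ n : ℕ, n ≠ 0 → q ^ n ≠ 1) :
    Set.range (fun a : QSA k q => Xgen k q * a) =
      Set.range (fun a : QSA k q => a * Xgen k q) :=
  stmt5_general k q hq
end
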